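/- Invariance of Φ^Ξ under change of edge/peripheral equations: let Ξ = (A,B,ν,z,f,f'') be a nondegenerate formal Neumann–Zagier datum of size N over a field K of characteristic zero and let P be an N×N integer matrix with det P = ±1. Then P·Ξ := (P·A, P·B, P·ν, z, f, f'') is again a nondegenerate formal Neumann–Zagier datum and Φ^{P·Ξ}(ħ) = Φ^{Ξ}(ħ). -/

import Mathlib

open scoped BigOperators
open Matrix

noncomputable section Defs

/-- Formal exponential of a power series (agreeing with the genuine exponential
whenever the constant term of `g` vanishes). -/
def expPS {A : Type*} [CommRing A] [Algebra ℚ A] (g : PowerSeries A) : PowerSeries A :=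
  PowerSeries.mk fun n => ∑ m ∈ Finset.range (n + 1),
    ((m.factorial : ℚ)⁻¹) • PowerSeries.coeff n (g ^ m)

/-- Substitution along a ring homomorphism `S : A →+* A⟦t⟧`, applied
coefficientwise to a power series in `t` and re-expanded in `t`. -/
def substAlong {A : Type*} [CommRing A] (S : A →+* PowerSeries A) (f : PowerSeries A) :
    PowerSeries A :=
  PowerSeries.mk fun n => ∑ m ∈ Finset.range (n + 1),
    PowerSeries.coeff (n - m) (S (PowerSeries.coeff m f))

/-- The second order differential operator `Σ_{i,j} L i j ∂_i ∂_j` on polynomials. -/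
def gaussD {R : Type*} [CommRing R] {ι : Type*} [Fintype ι] (L : Matrix ι ι R)
    (p : MvPolynomial ι R) : MvPolynomial ι R :=
  ∑ i, ∑ j, L i j • MvPolynomial.pderiv i (MvPolynomial.pderiv j p)

/-- `exp((1/2) Σ_{i,j} L_{ij} ∂_i ∂_j) p |_{x = 0}`; the exponential series
terminates on polynomials since the operator lowers total degree by two. -/
def gaussBV {R : Type*} [CommRing R] [Algebra ℚ R] {ι : Type*} [Fintype ι]
    (L : Matrix ι ι R) (p : MvPolynomial ι R) : R :=
  MvPolynomial.constantCoeff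
    (∑ m ∈ Finset.range (p.totalDegree + 1),
      ((1 : ℚ) / ((2 : ℚ) ^ m * m.factorial)) • (gaussD L)^[m] p)

/-- Formal Gaussian integration `⟨f⟩_{x,Λ}` of a formal power series with
polynomial coefficients, with respect to the invertible symmetric matrix `Λ`. -/
def fgi {R : Type*} [CommRing R] [Algebra ℚ R] {ι : Type*} [Fintype ι] [DecidableEq ι]
    (Λ : Matrix ι ι R) (f : PowerSeries (MvPolynomial ι R)) : PowerSeries R :=
  PowerSeries.mk fun n => gaussBV Λ⁻¹ (PowerSeries.coeff n f)

/-- Polynomial numerators of the negative polylogarithms: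
`Li_{-n}(z) = LiPoly n (z) / (1-z)^(n+1)`. -/
def LiPoly : ℕ → Polynomial ℚ
  | 0 => Polynomial.X
  | n + 1 => Polynomial.X *
      (Polynomial.derivative (LiPoly n) * (1 - Polynomial.X) + ((n : ℚ) + 1) • LiPoly n)

/-- The rational function `Li_{-n}(z)`, defined recursively by
`Li_0(z) = z/(1-z)` and `Li_{-n-1}(z) = z · (d/dz) Li_{-n}(z)`. -/
def negLi {K : Type*} [Field K] [CharZero K] (n : ℕ) (z : K) : K :=
  Polynomial.aeval z (LiPoly n) / (1 - z) ^ (n + 1)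

/-- The formal power series `ψ_ħ(ξ, z)` in `t = ħ^{1/2}`:
`exp(−Σ_{k,ℓ ≥ 0, k+ℓ/2 > 1} (B_k ξ^ℓ ħ^{k+ℓ/2−1}/(ℓ! k!)) Li_{2−k−ℓ}(z))`. -/
def psi {K : Type*} [Field K] [CharZero K] {A : Type*} [CommRing A] [Algebra ℚ A]
    [Algebra K A] (ξ : A) (z : K) : PowerSeries A :=
  expPS (PowerSeries.mk fun n =>
    if n = 0 then 0 else
      - ∑ k ∈ Finset.range ((n + 2) / 2 + 1),
          algebraMap K A
              ((bernoulli k / ((k.factorial : ℚ) * ((n + 2 - 2 * k).factorial : ℚ))) •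
                negLi (n - k) z) *
            ξ ^ (n + 2 - 2 * k))

end Defs

noncomputable section NZDef

/-- The data of a formal Neumann–Zagier datum `Ξ = (A, B, ν, z, f, f'')`. -/
structure NZ (K ι : Type*) where
  A : Matrix ι ι ℤ
  B : Matrix ι ι ℤ
  ν : ι → ℤ
  z : ι → K
  f : ι → ℤ
  f'' : ι → ℤ

namespace NZ

variable {K : Type*} [Field K] [CharZero K] {ι : Type*} [Fintype ι] [DecidableEq ι]

/-- `A` as a matrix over `K`. -/
def AK (Ξ : NZ K ι) : Matrix ι ι K := Ξ.A.map fun n => (n : K)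

/-- `B` as a matrix over `K`. -/
def BK (Ξ : NZ K ι) : Matrix ι ι K := Ξ.B.map fun n => (n : K)

/-- The quadratic form `Λ = −B⁻¹A + diag(1/(1−z_j))`. -/
def Lam (Ξ : NZ K ι) : Matrix ι ι K :=
  -(Ξ.BK⁻¹ * Ξ.AK) + Matrix.diagonal fun j => (1 - Ξ.z j)⁻¹

/-- Nondegeneracy of a formal Neumann–Zagier datum: `A Bᵗ` is symmetric,
`det B ≠ 0`, `(f, f'')` is a flattening, the shapes avoid `0` and `1`, and the
quadratic form `Λ` is invertible. -/
def IsNondeg (Ξ : NZ K ι) : Prop :=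
  (Ξ.A * Ξ.Bᵀ)ᵀ = Ξ.A * Ξ.Bᵀ ∧ Ξ.B.det ≠ 0 ∧
    Ξ.A.mulVec Ξ.f + Ξ.B.mulVec Ξ.f'' = Ξ.ν ∧
    (∀ j, Ξ.z j ≠ 0) ∧ (∀ j, Ξ.z j ≠ 1) ∧ IsUnit Ξ.Lam.det

/-- The vector `B⁻¹ ν` over `K`. -/
def w (Ξ : NZ K ι) : ι → K := Ξ.BK⁻¹.mulVec fun i => (Ξ.ν i : K)

/-- The linear part `(1/2) xᵗ 1 − (1/2) xᵗ B⁻¹ ν` of the exponential prefactor. -/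
def linPart (Ξ : NZ K ι) : MvPolynomial ι K :=
  ∑ i, MvPolynomial.C ((1 - Ξ.w i) / 2) * MvPolynomial.X i

/-- The constant `(1/8) fᵗ B⁻¹ A f`. -/
def quadConst (Ξ : NZ K ι) : K :=
  dotProduct (fun i => (Ξ.f i : K)) ((Ξ.BK⁻¹ * Ξ.AK).mulVec fun i => (Ξ.f i : K)) / 8

/-- The integrand
`f^Ξ_ħ(x,z) = exp((ħ^{1/2}/2) xᵗ1 − (ħ^{1/2}/2) xᵗB⁻¹ν + (ħ/8) fᵗB⁻¹Af) ∏_i ψ_ħ(x_i, z_i)`. -/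
def integrand (Ξ : NZ K ι) : PowerSeries (MvPolynomial ι K) :=
  expPS (PowerSeries.monomial 1 Ξ.linPart +
      PowerSeries.monomial 2 (MvPolynomial.C Ξ.quadConst)) *
    ∏ i, psi (MvPolynomial.X i) (Ξ.z i)

/-- The formal power series `Φ^Ξ(ħ) = ⟨f^Ξ_ħ(x,z)⟩_{x,Λ}`. -/
def Phi (Ξ : NZ K ι) : PowerSeries K := fgi Ξ.Lam Ξ.integrand

end NZ

end NZDef

/-- The Neumann–Zagier datum `P·Ξ = (P A, P B, P ν, z, f, f'')` obtained by a
change of the edge/peripheral equations. -/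
def NZ.leftMove {K ι : Type*} [Fintype ι] (Ξ : NZ K ι) (P : Matrix ι ι ℤ) : NZ K ι where
  A := P * Ξ.A
  B := P * Ξ.B
  ν := P.mulVec Ξ.ν
  z := Ξ.z
  f := Ξ.f
  f'' := Ξ.f''

/-- Invariance of `Φ^Ξ` under a change of the edge and
peripheral equations by a matrix `P ∈ GL_N(ℤ)`: `P·Ξ` is again a nondegenerate
Neumann–Zagier datum and `Φ^{P·Ξ}(ħ) = Φ^Ξ(ħ)`. -/
theorem Phi_row_change_invariance {K : Type*} [Field K] [CharZero K] {N : ℕ}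
    (Ξ : NZ K (Fin N)) (h : Ξ.IsNondeg) (P : Matrix (Fin N) (Fin N) ℤ)
    (hP : P.det = 1 ∨ P.det = -1) :
    (Ξ.leftMove P).IsNondeg ∧ (Ξ.leftMove P).Phi = Ξ.Phi := by

  classical
  set PK : Matrix (Fin N) (Fin N) K := P.map fun n => (n : K) with hPKdef
  have hmapP : ∀ (M : Matrix (Fin N) (Fin N) ℤ),
      (P * M).map (fun n => (n : K)) = PK * M.map (fun n => (n : K)) := by
    intro M
    exact Matrix.map_mul (f := Int.castRingHom K)
  have hPKdet : IsUnit PK.det := by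
    have : PK.det = ((P.det : ℤ) : K) := by
      simpa [hPKdef] using (RingHom.map_det (Int.castRingHom K) P).symm
    rw [this]
    rcases hP with h1 | h1 <;> simp [h1]
  have hPKinv : PK⁻¹ * PK = 1 := Matrix.nonsing_inv_mul PK hPKdet
  have hBK : (Ξ.leftMove P).BK = PK * Ξ.BK := hmapP Ξ.B
  have hAK : (Ξ.leftMove P).AK = PK * Ξ.AK := hmapP Ξ.A
  have key1 : (Ξ.leftMove P).BK⁻¹ * (Ξ.leftMove P).AK = Ξ.BK⁻¹ * Ξ.AK := by
    rw [hBK, hAK, Matrix.mul_inv_rev]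
    rw [Matrix.mul_assoc, ← Matrix.mul_assoc PK⁻¹, hPKinv, Matrix.one_mul]
  have key2 : (Ξ.leftMove P).w = Ξ.w := by
    have hcast : (fun i => (((Ξ.leftMove P).ν i : ℤ) : K)) =
        PK.mulVec fun i => (Ξ.ν i : K) := by
      funext i
      simp [NZ.leftMove, Matrix.mulVec, dotProduct, hPKdef, Matrix.map_apply]
    unfold NZ.w
    rw [hcast, hBK, Matrix.mul_inv_rev, Matrix.mulVec_mulVec, Matrix.mul_assoc,
      hPKinv, Matrix.mul_one]
  have keyLam : (Ξ.leftMove P).Lam = Ξ.Lam := by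
    unfold NZ.Lam
    rw [key1]
    rfl
  have hz : (Ξ.leftMove P).z = Ξ.z := rfl
  constructor
  · obtain ⟨h1, h2, h3, h4, h5, h6⟩ := h
    refine ⟨?_, ?_, ?_, h4, h5, ?_⟩
    · show ((P * Ξ.A) * (P * Ξ.B)ᵀ)ᵀ = (P * Ξ.A) * (P * Ξ.B)ᵀ
      have e : (P * Ξ.A) * (P * Ξ.B)ᵀ = P * (Ξ.A * Ξ.Bᵀ) * Pᵀ := by
        rw [Matrix.transpose_mul]
        simp [Matrix.mul_assoc]
      rw [e, Matrix.transpose_mul, Matrix.transpose_mul, Matrix.transpose_transpose, h1]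
      simp [Matrix.mul_assoc]
    · show (P * Ξ.B).det ≠ 0
      rw [Matrix.det_mul]
      rcases hP with h' | h' <;> simp [h', h2]
    · show (P * Ξ.A).mulVec Ξ.f + (P * Ξ.B).mulVec Ξ.f'' = P.mulVec Ξ.ν
      rw [← Matrix.mulVec_mulVec, ← Matrix.mulVec_mulVec, ← Matrix.mulVec_add, h3]
    · rw [keyLam]; exact h6
  · unfold NZ.Phi NZ.integrand NZ.linPart NZ.quadConst
    have hf : (Ξ.leftMove P).f = Ξ.f := rfl
    rw [keyLam, key1, key2, hz, hf]
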